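/- arXiv:1508.06408 — 5 statements merged into one kernel-verified Lean document; each statement's English description precedes it below -/
import Mathlib

section
/- Let V₁, V₂ be positive definite d×d complex matrices. Then V₁V₂⁻¹V₁ + V₂V₁⁻¹V₂ − V₁ − V₂ is positive semidefinite. -/
open scoped ComplexOrder Matrix

theorem stmt_1 {d : ℕ} (V₁ V₂ : Matrix (Fin d) (Fin d) ℂ)
    (hV₁ : V₁.PosDef) (hV₂ : V₂.PosDef) :
    (V₁ * V₂⁻¹ * V₁ + V₂ * V₁⁻¹ * V₂ - V₁ - V₂).PosSemidef := by
  have h1 : V₁⁻¹ * V₁ = 1 := Matrix.nonsing_inv_mul _ hV₁.det_pos.ne'.isUnit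
  have h2 : V₂⁻¹ * V₂ = 1 := Matrix.nonsing_inv_mul _ hV₂.det_pos.ne'.isUnit
  have h1' : V₁ * V₁⁻¹ = 1 := Matrix.mul_nonsing_inv _ hV₁.det_pos.ne'.isUnit
  have h2' : V₂ * V₂⁻¹ = 1 := Matrix.mul_nonsing_inv _ hV₂.det_pos.ne'.isUnit
  have hM : (V₁ - V₂)ᴴ = V₁ - V₂ := by
    rw [Matrix.conjTranspose_sub, hV₁.isHermitian, hV₂.isHermitian]
  have key : V₁ * V₂⁻¹ * V₁ + V₂ * V₁⁻¹ * V₂ - V₁ - V₂ =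
      (V₁ - V₂)ᴴ * V₂⁻¹ * (V₁ - V₂) + (V₁ - V₂)ᴴ * V₁⁻¹ * (V₁ - V₂) := by
    rw [hM]
    simp only [Matrix.sub_mul, Matrix.mul_sub, Matrix.mul_assoc, h1, h2,
      Matrix.mul_one]
    rw [← Matrix.mul_assoc V₁ V₁⁻¹, h1', ← Matrix.mul_assoc V₂ V₂⁻¹, h2']
    noncomm_ring
  rw [key]
  exact ((hV₂.posSemidef.inv.conjTranspose_mul_mul_same _).add
    (hV₁.posSemidef.inv.conjTranspose_mul_mul_same _))
end

section
/- Let W, M̃, m be positive semidefinite d×d Hermitian matrices with W positive definite and 0 < m ≤ W. Then (W + M̃)⁻¹ − (W + M̃ + m)⁻¹ ≥ (1/2)(W + M̃)⁻¹ m (W + M̃)⁻¹ in the Loewner order. -/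
/-!
No square roots are needed: with `B = A + m` and `X = B⁻¹ m A⁻¹`, the resolvent identity
`A⁻¹ - B⁻¹ = A⁻¹ m B⁻¹` gives
`A⁻¹ - B⁻¹ - ½ A⁻¹ m A⁻¹ = ½ Xᴴ (A m⁻¹ A - m) X`,
and `A m⁻¹ A - m = (A - m) m⁻¹ (A - m) + 2 (A - m)` is positive semidefinite once `m ≤ A`.
-/

open scoped ComplexOrder Matrix

namespace Matrix

variable {n : Type*} [Fintype n] [DecidableEq n]

section CommRing

variable {R : Type*} [CommRing R] {A m : Matrix n n R}

theorem mul_inv_mul_sub_eq_sub_mul_inv_mul_add (hm : IsUnit m) :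
    A * m⁻¹ * A - m = (A - m) * m⁻¹ * (A + m) := by
  rw [isUnit_iff_isUnit_det] at hm
  simp only [Matrix.sub_mul, Matrix.mul_add, Matrix.mul_assoc, nonsing_inv_mul _ hm,
    mul_nonsing_inv_cancel_left _ _ hm, Matrix.mul_one]
  abel

theorem two_smul_inv_sub_inv_add_sub_eq (hA : IsUnit A) (hm : IsUnit m) (hAm : IsUnit (A + m)) :
    2 • (A⁻¹ - (A + m)⁻¹) - A⁻¹ * m * A⁻¹ =
      (A⁻¹ * m * (A + m)⁻¹) * (A * m⁻¹ * A - m) * ((A + m)⁻¹ * m * A⁻¹) := by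
  have hresolvent : A⁻¹ - (A + m)⁻¹ = A⁻¹ * m * (A + m)⁻¹ := by
    rw [inv_sub_inv (iff_of_true hA hAm), add_sub_cancel_left]
  have hfactor := mul_inv_mul_sub_eq_sub_mul_inv_mul_add (A := A) hm
  rw [isUnit_iff_isUnit_det] at hA hm hAm
  have hmiddle : (A * m⁻¹ * A - m) * (A + m)⁻¹ * m = A - m := by
    rw [hfactor, mul_nonsing_inv_cancel_right _ _ hAm, nonsing_inv_mul_cancel_right _ _ hm]
  have hsub : (A + m)⁻¹ * (A - m) * A⁻¹ = 2 • (A + m)⁻¹ - A⁻¹ := by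
    rw [show A - m = 2 • A - (A + m) by abel, Matrix.mul_sub, Matrix.sub_mul, Matrix.mul_smul,
      Matrix.smul_mul, mul_nonsing_inv_cancel_right _ _ hA, nonsing_inv_mul _ hAm, Matrix.one_mul]
  calc 2 • (A⁻¹ - (A + m)⁻¹) - A⁻¹ * m * A⁻¹
      = A⁻¹ * m * ((A + m)⁻¹ * (A - m) * A⁻¹) := by
        rw [hsub, Matrix.mul_sub, Matrix.mul_smul, ← hresolvent, Matrix.mul_assoc]
    _ = _ := by
        rw [← hmiddle]
        simp only [Matrix.mul_assoc]

end CommRing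

section RCLike

variable {𝕜 : Type*} [RCLike 𝕜] {A m : Matrix n n 𝕜}

theorem PosDef.posSemidef_mul_inv_mul_sub (hm : m.PosDef) (hAm : (A - m).PosSemidef) :
    (A * m⁻¹ * A - m).PosSemidef := by
  have hm' : IsUnit m.det := (isUnit_iff_isUnit_det m).mp hm.isUnit
  have hsplit : A * m⁻¹ * A - m = (A - m)ᴴ * m⁻¹ * (A - m) + (2 : 𝕜) • (A - m) := by
    simp only [hAm.isHermitian.eq, Matrix.sub_mul, Matrix.mul_sub, Matrix.mul_assoc,
      nonsing_inv_mul _ hm', mul_nonsing_inv_cancel_left _ _ hm', Matrix.mul_one]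
    module
  rw [hsplit]
  exact (hm.inv.posSemidef.conjTranspose_mul_mul_same _).add (hAm.smul (by norm_num))

theorem PosDef.posSemidef_inv_sub_inv_add_sub (hm : m.PosDef) (hAm : (A - m).PosSemidef) :
    (A⁻¹ - (A + m)⁻¹ - (1 / 2 : 𝕜) • (A⁻¹ * m * A⁻¹)).PosSemidef := by
  have hA : A.PosDef := by simpa using PosDef.posSemidef_add hAm hm
  have hAm' : (A + m).PosDef := hA.add hm
  have hX : ((A + m)⁻¹ * m * A⁻¹)ᴴ = A⁻¹ * m * (A + m)⁻¹ := by
    simp only [conjTranspose_mul, hA.inv.isHermitian.eq, hAm'.inv.isHermitian.eq,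
      hm.isHermitian.eq, Matrix.mul_assoc]
  have hsmul : A⁻¹ - (A + m)⁻¹ - (1 / 2 : 𝕜) • (A⁻¹ * m * A⁻¹) =
      (1 / 2 : 𝕜) • (2 • (A⁻¹ - (A + m)⁻¹) - A⁻¹ * m * A⁻¹) := by
    module
  rw [hsmul, two_smul_inv_sub_inv_add_sub_eq hA.isUnit hm.isUnit hAm'.isUnit, ← hX]
  exact ((hm.posSemidef_mul_inv_mul_sub hAm).conjTranspose_mul_mul_same _).smul (by positivity)

end RCLike

end Matrix

theorem stmt_6_general {d : ℕ} (W M m : Matrix (Fin d) (Fin d) ℂ)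
    (hM : M.PosSemidef) (hm : m.PosDef)
    (hmW : (W - m).PosSemidef) :
    ((W + M)⁻¹ - (W + M + m)⁻¹ -
      (1 / 2 : ℂ) • ((W + M)⁻¹ * m * (W + M)⁻¹)).PosSemidef := by
  have hWMm : (W + M - m).PosSemidef := by simpa only [sub_add_eq_add_sub] using hmW.add hM
  exact hm.posSemidef_inv_sub_inv_add_sub hWMm

theorem stmt_6 {d : ℕ} (W M m : Matrix (Fin d) (Fin d) ℂ)
    (hW : W.PosDef) (hM : M.PosSemidef) (hm : m.PosDef)
    (hmW : (W - m).PosSemidef) :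
    ((W + M)⁻¹ - (W + M + m)⁻¹ -
      (1 / 2 : ℂ) • ((W + M)⁻¹ * m * (W + M)⁻¹)).PosSemidef :=
  stmt_6_general W M m hM hm hmW
end

section
/- Let U, V be positive definite d×d complex matrices such that I ≤ V^{1/2} U V^{1/2}. Set N = U^{-1/2} V⁻¹ U^{-1/2}. Then 0 < N ≤ I, and the matrices W₁ = U^{1/2}(I + (I−N)^{1/2})U^{1/2} and W₂ = U^{1/2}(I − (I−N)^{1/2})U^{1/2} are positive definite and satisfy U = (W₁ + W₂)/2 and V = (W₁⁻¹ + W₂⁻¹)/2. -/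
open scoped ComplexOrder Matrix

/-- `Matrix.PosSemidef.sqrt` was removed from Mathlib; restored with its old definition. -/
noncomputable def Matrix.PosSemidef.sqrt {n 𝕜 : Type*} [Fintype n] [DecidableEq n] [RCLike 𝕜]
    {A : Matrix n n 𝕜} (hA : A.PosSemidef) : Matrix n n 𝕜 :=
  hA.1.eigenvectorUnitary.1 * Matrix.diagonal ((↑) ∘ (√·) ∘ hA.1.eigenvalues) *
    (star hA.1.eigenvectorUnitary : Matrix n n 𝕜)

/-! Conjugating by `V^{1/2}` and then by `U^{-1/2}` turns `1 ≤ V^{1/2} U V^{1/2}` into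
`V⁻¹ ≤ U` and then into `N ≤ 1`. For a Hermitian square root `S` of `1 - N`, the identity
`2 (1 - S) = N + (1 - S)ᴴ (1 - S)` makes `1 - S` positive definite, and `W₁, W₂` are
congruent to `1 ± S`. The averages come from `(1 + S) + (1 - S) = 2` and
`(1 + S)⁻¹ + (1 - S)⁻¹ = 2 (1 - S²)⁻¹ = 2 N⁻¹`, together with `U^{1/2} N U^{1/2} = V⁻¹`. -/

namespace Matrix

variable {n 𝕜 : Type*} [Fintype n] [DecidableEq n] [RCLike 𝕜]

open scoped MatrixOrder

lemma PosSemidef.sqrt_eq_cfcSqrt {A : Matrix n n 𝕜} (hA : A.PosSemidef) :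
    hA.sqrt = CFC.sqrt A := by
  rw [CFC.sqrt_eq_cfc, cfc_nnreal_eq_real _ A, hA.1.cfc_eq]
  simp only [IsHermitian.cfc, PosSemidef.sqrt, Unitary.conjStarAlgAut_apply]
  congr 3
  funext i
  simp [Real.coe_sqrt, Real.coe_toNNReal', max_eq_left (hA.eigenvalues_nonneg i)]

lemma PosSemidef.sqrt_mul_sqrt {A : Matrix n n 𝕜} (hA : A.PosSemidef) :
    hA.sqrt * hA.sqrt = A := by
  rw [hA.sqrt_eq_cfcSqrt]
  exact CFC.sqrt_mul_sqrt_self A hA.nonneg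

lemma PosDef.posDef_sqrt {A : Matrix n n 𝕜} (hA : A.PosDef) : hA.posSemidef.sqrt.PosDef := by
  rw [hA.posSemidef.sqrt_eq_cfcSqrt, ← isStrictlyPositive_iff_posDef]
  exact hA.isStrictlyPositive.sqrt

lemma PosDef.sqrt_inv {A : Matrix n n 𝕜} (hA : A.PosDef) :
    hA.inv.posSemidef.sqrt = hA.posSemidef.sqrt⁻¹ := by
  rw [hA.inv.posSemidef.sqrt_eq_cfcSqrt, hA.posSemidef.sqrt_eq_cfcSqrt, hA.posSemidef.inv_sqrt]

lemma PosDef.conj {Q X : Matrix n n 𝕜} (hX : X.PosDef) (hQ : Q.IsHermitian) (hQu : IsUnit Q) :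
    (Q * X * Q).PosDef := by
  simpa only [star_eq_conjTranspose, hQ.eq] using
    (IsUnit.posDef_star_right_conjugate_iff hQu).2 hX

lemma IsHermitian.conj_le_conj_iff {R X Y : Matrix n n 𝕜} (hR : R.IsHermitian)
    (hRu : IsUnit R) : R * X * R ≤ R * Y * R ↔ X ≤ Y := by
  have hdet : IsUnit R.det := (isUnit_iff_isUnit_det R).1 hRu
  refine ⟨fun h ↦ ?_, fun h ↦ hR.isSelfAdjoint.conjugate_le_conjugate h⟩
  simpa only [Matrix.mul_assoc, nonsing_inv_mul_cancel_left _ _ hdet, mul_nonsing_inv _ hdet,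
    mul_one] using hR.inv.isSelfAdjoint.conjugate_le_conjugate h

lemma IsHermitian.posDef_one_sub {S : Matrix n n 𝕜} (hS : S.IsHermitian)
    (h : (1 - S * S).PosDef) : (1 - S).PosDef := by
  have hsum : (1 - S * S) + (1 - S)ᴴ * (1 - S) = (2 : 𝕜) • (1 - S) := by
    rw [conjTranspose_sub, conjTranspose_one, hS.eq, two_smul]
    noncomm_ring
  have h2 := (h.add_posSemidef (posSemidef_conjTranspose_mul_self (1 - S))).smul
    (inv_pos.2 (two_pos : (0 : 𝕜) < 2))
  rwa [hsum, smul_smul, inv_mul_cancel₀ two_ne_zero, one_smul] at h2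

section CommRing

variable {α : Type*} [CommRing α]

lemma conj_inv_mul_self {R : Matrix n n α} (hRu : IsUnit R) : R * (R * R)⁻¹ * R = 1 := by
  have hdet : IsUnit R.det := (isUnit_iff_isUnit_det R).1 hRu
  rw [mul_inv_rev, mul_nonsing_inv_cancel_left _ _ hdet, nonsing_inv_mul _ hdet]

lemma conj_one_add_add_conj_one_sub (Q S : Matrix n n α) :
    Q * (1 + S) * Q + Q * (1 - S) * Q = (2 : α) • (Q * Q) := by
  rw [two_smul]
  noncomm_ring

lemma inv_one_add_add_inv_one_sub {S : Matrix n n α} (hS : IsUnit (1 - S * S)) :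
    (1 + S)⁻¹ + (1 - S)⁻¹ = (2 : α) • (1 - S * S)⁻¹ := by
  have hdet : IsUnit (1 - S * S).det := (isUnit_iff_isUnit_det _).1 hS
  have h₁ : (1 + S)⁻¹ = (1 - S) * (1 - S * S)⁻¹ := inv_eq_right_inv <| by
    rw [← Matrix.mul_assoc, show (1 + S) * (1 - S) = 1 - S * S by noncomm_ring,
      mul_nonsing_inv _ hdet]
  have h₂ : (1 - S)⁻¹ = (1 + S) * (1 - S * S)⁻¹ := inv_eq_right_inv <| by
    rw [← Matrix.mul_assoc, show (1 - S) * (1 + S) = 1 - S * S by noncomm_ring,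
      mul_nonsing_inv _ hdet]
  rw [h₁, h₂, ← Matrix.add_mul, show (1 - S) + (1 + S) = (2 : α) • (1 : Matrix n n α) by
    rw [two_smul]; abel, Matrix.smul_mul, Matrix.one_mul]

lemma inv_conj_one_add_add_inv_conj_one_sub (Q : Matrix n n α) {S : Matrix n n α}
    (hS : IsUnit (1 - S * S)) :
    (Q * (1 + S) * Q)⁻¹ + (Q * (1 - S) * Q)⁻¹ = (2 : α) • (Q * (1 - S * S) * Q)⁻¹ := by
  simp only [mul_inv_rev]
  rw [← Matrix.mul_add, ← Matrix.add_mul, inv_one_add_add_inv_one_sub hS, Matrix.smul_mul,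
    Matrix.mul_smul]

end CommRing

end Matrix

theorem stmt_9 {d : ℕ} (U V : Matrix (Fin d) (Fin d) ℂ)
    (hU : U.PosDef) (hV : V.PosDef)
    (h : (hV.posSemidef.sqrt * U * hV.posSemidef.sqrt - 1).PosSemidef)
    (N : Matrix (Fin d) (Fin d) ℂ)
    (hN : N = hU.inv.posSemidef.sqrt * V⁻¹ * hU.inv.posSemidef.sqrt) :
    N.PosDef ∧ (1 - N).PosSemidef ∧
      ∀ S : Matrix (Fin d) (Fin d) ℂ, S.PosSemidef → S * S = 1 - N →
        ∀ W₁ W₂ : Matrix (Fin d) (Fin d) ℂ,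
          W₁ = hU.posSemidef.sqrt * (1 + S) * hU.posSemidef.sqrt →
          W₂ = hU.posSemidef.sqrt * (1 - S) * hU.posSemidef.sqrt →
          W₁.PosDef ∧ W₂.PosDef ∧
            U = (1 / 2 : ℂ) • (W₁ + W₂) ∧ V = (1 / 2 : ℂ) • (W₁⁻¹ + W₂⁻¹) := by
  set Q := hU.posSemidef.sqrt
  have hQ : Q.PosDef := hU.posDef_sqrt
  have hR := hV.posDef_sqrt
  have hP := hU.inv.posDef_sqrt
  open scoped MatrixOrder in
  have hVU : V⁻¹ ≤ U := by
    rwa [← hV.posSemidef.sqrt_mul_sqrt, ← hR.isHermitian.conj_le_conj_iff hR.isUnit,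
      Matrix.conj_inv_mul_self hR.isUnit]
  open scoped MatrixOrder in
  have h1N : N ≤ 1 := by
    rwa [hN, ← Matrix.conj_inv_mul_self hP.isUnit, hP.isHermitian.conj_le_conj_iff hP.isUnit,
      hU.inv.posSemidef.sqrt_mul_sqrt, Matrix.nonsing_inv_nonsing_inv _ hU.det_pos.ne'.isUnit]
  have hNpd : N.PosDef := hN ▸ hV.inv.conj hP.isHermitian hP.isUnit
  refine ⟨hNpd, h1N, fun S hS hSS W₁ W₂ hW₁ hW₂ => ?_⟩
  have hSN : 1 - S * S = N := by rw [hSS, sub_sub_cancel]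
  have hQNQ : Q * N * Q = V⁻¹ := by
    have hQdet : IsUnit Q.det := hQ.det_pos.ne'.isUnit
    rw [hN, hU.sqrt_inv, Matrix.mul_assoc, Matrix.nonsing_inv_mul_cancel_right _ _ hQdet,
      Matrix.mul_nonsing_inv_cancel_left _ _ hQdet]
  refine ⟨hW₁ ▸ (Matrix.PosDef.one.add_posSemidef hS).conj hQ.isHermitian hQ.isUnit,
    hW₂ ▸ (hS.isHermitian.posDef_one_sub (hSN ▸ hNpd)).conj hQ.isHermitian hQ.isUnit, ?_, ?_⟩
  · rw [hW₁, hW₂, Matrix.conj_one_add_add_conj_one_sub, hU.posSemidef.sqrt_mul_sqrt,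
      smul_smul]
    norm_num
  · rw [hW₁, hW₂, Matrix.inv_conj_one_add_add_inv_conj_one_sub Q (hSN ▸ hNpd.isUnit), hSN,
      hQNQ, Matrix.nonsing_inv_nonsing_inv _ hV.det_pos.ne'.isUnit, smul_smul]
    norm_num
end

section
/- Let W : I₀ → Mat_d(ℂ) be a locally integrable matrix weight on an interval I₀ (positive definite a.e.) and f : I₀ → ℂᵈ with W^{1/2}f ∈ L². Set V = (1/|I₀|)∫_{I₀} W⁻¹(t) dt and 𝐟 = (1/|I₀|)∫_{I₀} f(t) dt. Then ⟨V⁻¹𝐟, 𝐟⟩ ≤ (1/|I₀|)∫_{I₀} ‖W^{1/2}(t)f(t)‖² dt. -/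
open scoped ComplexOrder Matrix

/-!
Put `e = V⁻¹ 𝐟`, so that the left-hand side is `Re ⟨𝐟, e⟩ = Re ⟨V e, e⟩`. At each `t`,
positivity of `W(t)` at the vector `f(t) - W(t)⁻¹ e` gives
`2 Re ⟨f(t), e⟩ ≤ ⟨W(t) f(t), f(t)⟩ + ⟨W(t)⁻¹ e, e⟩`. Averaging over `[a, b]` yields
`2 Re ⟨𝐟, e⟩ ≤ avg ⟨W f, f⟩ + Re ⟨V e, e⟩`, and the last term is again `Re ⟨𝐟, e⟩`.
-/

open MeasureTheory

theorem IntervalIntegrable.re {𝕜 : Type*} [RCLike 𝕜] {μ : Measure ℝ} {a b : ℝ} {f : ℝ → 𝕜}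
    (hf : IntervalIntegrable f μ a b) : IntervalIntegrable (fun t => RCLike.re (f t)) μ a b :=
  ⟨hf.1.re, hf.2.re⟩

namespace Matrix

variable {m n 𝕜 : Type*} [Fintype n] [RCLike 𝕜]

theorem PosDef.two_mul_re_dotProduct_le [DecidableEq n] {M : Matrix n n 𝕜} (hM : M.PosDef)
    (u v : n → 𝕜) :
    2 * RCLike.re (star v ⬝ᵥ u) ≤
      RCLike.re (star u ⬝ᵥ M *ᵥ u) + RCLike.re (star v ⬝ᵥ M⁻¹ *ᵥ v) := by
  have hdet : IsUnit M.det := (M.isUnit_iff_isUnit_det).mp hM.isUnit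
  have hMMinv : M * M⁻¹ = 1 := M.mul_nonsing_inv hdet
  have hMinvM : M⁻¹ * M = 1 := M.nonsing_inv_mul hdet
  have hstar : star (M⁻¹ *ᵥ v) = star v ᵥ* M⁻¹ := by
    rw [star_mulVec, hM.isHermitian.inv]
  have hconj : RCLike.re (star u ⬝ᵥ v) = RCLike.re (star v ⬝ᵥ u) := by
    rw [← RCLike.conj_re, ← RCLike.star_def, star_dotProduct, star_star, dotProduct_comm]
  have hnonneg := RCLike.nonneg_iff.mp
    (hM.posSemidef.dotProduct_mulVec_nonneg (u - M⁻¹ *ᵥ v)) |>.1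
  simp only [star_sub, mulVec_sub, sub_dotProduct, dotProduct_sub, hstar, ← dotProduct_mulVec,
    mulVec_mulVec, hMMinv, hMinvM, one_mulVec, map_sub] at hnonneg
  linarith

section Integral

variable {μ : Measure ℝ} {a b : ℝ}

theorem intervalIntegrable_dotProduct (c : n → 𝕜) {f : ℝ → n → 𝕜}
    (hf : ∀ j, IntervalIntegrable (fun t => f t j) μ a b) :
    IntervalIntegrable (fun t => c ⬝ᵥ f t) μ a b := by
  simpa only [dotProduct, Finset.sum_fn] using
    IntervalIntegrable.sum Finset.univ fun j _ => (hf j).const_mul (c j)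

theorem integral_dotProduct (c : n → 𝕜) {f : ℝ → n → 𝕜}
    (hf : ∀ j, IntervalIntegrable (fun t => f t j) μ a b) :
    ∫ t in a..b, c ⬝ᵥ f t ∂μ = c ⬝ᵥ fun j => ∫ t in a..b, f t j ∂μ := by
  simp only [dotProduct]
  rw [intervalIntegral.integral_finsetSum fun j _ => (hf j).const_mul (c j)]
  simp only [intervalIntegral.integral_const_mul]

theorem intervalIntegrable_mulVec_apply (y : n → 𝕜) {A : ℝ → Matrix m n 𝕜}
    (hA : ∀ i j, IntervalIntegrable (fun t => A t i j) μ a b) (i : m) :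
    IntervalIntegrable (fun t => (A t *ᵥ y) i) μ a b := by
  simpa only [mulVec, dotProduct_comm] using intervalIntegrable_dotProduct y (hA i)

theorem integral_dotProduct_mulVec [Fintype m] (x : m → 𝕜) (y : n → 𝕜)
    {A : ℝ → Matrix m n 𝕜} (hA : ∀ i j, IntervalIntegrable (fun t => A t i j) μ a b) :
    ∫ t in a..b, x ⬝ᵥ A t *ᵥ y ∂μ = x ⬝ᵥ (of fun i j => ∫ t in a..b, A t i j ∂μ) *ᵥ y := by
  rw [integral_dotProduct x (intervalIntegrable_mulVec_apply y hA)]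
  congr 1
  ext i
  simp only [mulVec, of_apply, dotProduct_comm _ y]
  exact integral_dotProduct y (hA i)

theorem two_mul_re_dotProduct_integral_le [DecidableEq n] (hab : a ≤ b)
    {W : ℝ → Matrix n n 𝕜} {f : ℝ → n → 𝕜} (hW : ∀ t ∈ Set.Icc a b, (W t).PosDef)
    (hWinv : ∀ i j, IntervalIntegrable (fun t => (W t)⁻¹ i j) μ a b)
    (hf : ∀ j, IntervalIntegrable (fun t => f t j) μ a b)
    (hQ : IntervalIntegrable (fun t => RCLike.re (star (f t) ⬝ᵥ W t *ᵥ f t)) μ a b)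
    (e : n → 𝕜) :
    2 * RCLike.re (star e ⬝ᵥ fun j => ∫ t in a..b, f t j ∂μ) ≤
      ∫ t in a..b, RCLike.re (star (f t) ⬝ᵥ W t *ᵥ f t) ∂μ +
        RCLike.re (star e ⬝ᵥ (of fun i j => ∫ t in a..b, (W t)⁻¹ i j ∂μ) *ᵥ e) := by
  have hf_e := intervalIntegrable_dotProduct (star e) hf
  have hWinv_e :=
    intervalIntegrable_dotProduct (star e) (intervalIntegrable_mulVec_apply e hWinv)
  rw [← integral_dotProduct _ hf, ← integral_dotProduct_mulVec _ _ hWinv,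
    ← intervalIntegral.intervalIntegral_re hf_e, ← intervalIntegral.intervalIntegral_re hWinv_e,
    ← intervalIntegral.integral_add hQ hWinv_e.re, ← intervalIntegral.integral_const_mul]
  exact intervalIntegral.integral_mono_on hab (hf_e.re.const_mul 2) (hQ.add hWinv_e.re)
    fun t ht => (hW t ht).two_mul_re_dotProduct_le (f t) e

end Integral

end Matrix

theorem stmt_12 {d : ℕ} (a b : ℝ) (hab : a < b)
    (W : ℝ → Matrix (Fin d) (Fin d) ℂ) (f : ℝ → Fin d → ℂ)
    (hWpd : ∀ t ∈ Set.Icc a b, (W t).PosDef)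
    (hWinv_int : ∀ i j, IntervalIntegrable (fun t => (W t)⁻¹ i j)
      MeasureTheory.volume a b)
    (hf_int : ∀ j, IntervalIntegrable (fun t => f t j) MeasureTheory.volume a b)
    (hQ_int : IntervalIntegrable (fun t => (star (f t) ⬝ᵥ W t *ᵥ f t).re)
      MeasureTheory.volume a b)
    (V : Matrix (Fin d) (Fin d) ℂ)
    (hV : V = Matrix.of fun i j => (((b - a)⁻¹ : ℝ) : ℂ) * ∫ t in a..b, (W t)⁻¹ i j)
    (hVpd : V.PosDef)
    (favg : Fin d → ℂ)
    (hfavg : favg = fun j => (((b - a)⁻¹ : ℝ) : ℂ) * ∫ t in a..b, f t j) :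
    (star favg ⬝ᵥ V⁻¹ *ᵥ favg).re ≤
      (b - a)⁻¹ * ∫ t in a..b, (star (f t) ⬝ᵥ W t *ᵥ f t).re := by
  have hba : 0 < b - a := sub_pos.2 hab
  set e := V⁻¹ *ᵥ favg with he
  have hz : star favg ⬝ᵥ e = star e ⬝ᵥ favg := by
    rw [he, Matrix.star_mulVec, hVpd.isHermitian.inv, Matrix.dotProduct_mulVec]
  have hVe : V *ᵥ e = favg := by
    rw [Matrix.mulVec_mulVec, V.mul_nonsing_inv (V.isUnit_iff_isUnit_det.mp hVpd.isUnit),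
      Matrix.one_mulVec]
  have key : 2 * (star e ⬝ᵥ fun j => ∫ t in a..b, f t j).re ≤
      (∫ t in a..b, (star (f t) ⬝ᵥ W t *ᵥ f t).re) +
        (star e ⬝ᵥ (Matrix.of fun i j => ∫ t in a..b, (W t)⁻¹ i j) *ᵥ e).re :=
    Matrix.two_mul_re_dotProduct_integral_le hab.le hWpd hWinv_int hf_int hQ_int e
  have hscale : ∀ x : Fin d → ℂ,
      (b - a) * (star e ⬝ᵥ (((b - a)⁻¹ : ℝ) : ℂ) • x).re = (star e ⬝ᵥ x).re := fun x => by
    rw [dotProduct_smul, smul_eq_mul, Complex.re_ofReal_mul, mul_inv_cancel_left₀ hba.ne']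
  have hf_avg : (b - a) * (star e ⬝ᵥ favg).re = (star e ⬝ᵥ fun j => ∫ t in a..b, f t j).re :=
    hfavg ▸ hscale _
  have hV_avg : (b - a) * (star e ⬝ᵥ favg).re =
      (star e ⬝ᵥ (Matrix.of fun i j => ∫ t in a..b, (W t)⁻¹ i j) *ᵥ e).re := by
    have hV' : V = (((b - a)⁻¹ : ℝ) : ℂ) • Matrix.of fun i j => ∫ t in a..b, (W t)⁻¹ i j := hV
    rw [← hVe, hV', Matrix.smul_mulVec, hscale]
  rw [hz, le_inv_mul_iff₀ hba]
  linarith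
end

section
/- Let W, m, M̃ be d×d Hermitian matrices with W positive definite, M̃ ≥ 0, and 0 ≤ m ≤ W. Define B(f, F, W, M) = 4(F − ⟨(W+M)⁻¹f, f⟩) for M = M̃ + m and B̃(f, F, W, M̃) analogously. Then for every f ∈ ℂᵈ and F ∈ ℝ: B(f,F,W,M̃+m) − B̃(f,F,W,M̃) ≥ 2⟨(W+M̃)⁻¹ m (W+M̃)⁻¹ f, f⟩. -/
/-!
Write `A = W + M̃`. The Woodbury-type identity
`A⁻¹ - (A + m)⁻¹ = A⁻¹ (m - m (A + m)⁻¹ m) A⁻¹` turns the claim into `2 m (A + m)⁻¹ m ≤ m`,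
i.e. `N P⁻¹ N ≤ N` for `N = 2m` and `P = A + m`, where `0 ≤ N ≤ P` because `m ≤ W ≤ A`.
That is a Schur complement statement: the block matrix `[[P, N], [N, N]]` is positive
semidefinite, being `[[P - N, 0], [0, 0]] + [[N, N], [N, N]]`.
-/

open scoped ComplexOrder Matrix

theorem invOf_sub_invOf_eq_invOf_mul_mul_invOf {R : Type*} [Ring R] (a b : R) [Invertible a]
    [Invertible b] : ⅟a - ⅟b = ⅟a * (b - a - (b - a) * ⅟b * (b - a)) * ⅟a := by
  have hba : ⅟a - ⅟b = ⅟b * (b - a) * ⅟a := by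
    rw [mul_sub, invOf_mul_self, sub_mul, one_mul, mul_assoc, mul_invOf_self, mul_one]
  symm
  calc ⅟a * (b - a - (b - a) * ⅟b * (b - a)) * ⅟a
      = ⅟a * (b - a) * ⅟a - ⅟a * (b - a) * ⅟b * (b - a) * ⅟a := by noncomm_ring
    _ = ⅟b * (b - a) * ⅟a := by rw [← invOf_sub_invOf]; noncomm_ring
    _ = ⅟a - ⅟b := hba.symm

namespace Matrix

variable {n : Type*} [Fintype n] [DecidableEq n]

theorem inv_sub_inv_add {R : Type*} [CommRing R] {A m : Matrix n n R} (hA : IsUnit A)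
    (hAm : IsUnit (A + m)) : A⁻¹ - (A + m)⁻¹ = A⁻¹ * (m - m * (A + m)⁻¹ * m) * A⁻¹ := by
  have := hA.invertible
  have := hAm.invertible
  simpa only [invOf_eq_nonsing_inv, add_sub_cancel_left]
    using invOf_sub_invOf_eq_invOf_mul_mul_invOf A (A + m)

variable {K : Type*} [Field K] [PartialOrder K] [StarRing K] [StarOrderedRing K]

theorem PosSemidef.fromBlocks_self_self {P N : Matrix n n K} (hN : N.PosSemidef)
    (hPN : (P - N).PosSemidef) : (fromBlocks P N N N).PosSemidef := by
  have h := (hPN.conjTranspose_mul_mul_same (fromCols (1 : Matrix n n K) (0 : Matrix n n K))).add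
    (hN.conjTranspose_mul_mul_same (fromCols (1 : Matrix n n K) (1 : Matrix n n K)))
  convert h using 1
  ext (i | i) (j | j) <;> simp [conjTranspose_fromCols_eq_fromRows_conjTranspose]

theorem PosSemidef.sub_mul_inv_mul_self {P N : Matrix n n K} (hP : P.PosDef) (hN : N.PosSemidef)
    (hPN : (P - N).PosSemidef) : (N - N * P⁻¹ * N).PosSemidef := by
  have := hP.isUnit.invertible
  have hSchur := (PosDef.fromBlocks₁₁ N N hP).mp
  rw [hN.isHermitian.eq] at hSchur
  exact hSchur (hN.fromBlocks_self_self hPN)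

theorem PosDef.posSemidef_four_smul_inv_sub_inv_add_sub {A m : Matrix n n K} (hA : A.PosDef)
    (hm : m.PosSemidef) (hmA : (A - m).PosSemidef) :
    (4 • (A⁻¹ - (A + m)⁻¹) - 2 • (A⁻¹ * m * A⁻¹)).PosSemidef := by
  have hAm : (A + m).PosDef := hA.add_posSemidef hm
  have hSchur : (m + m - (m + m) * (A + m)⁻¹ * (m + m)).PosSemidef :=
    (hm.add hm).sub_mul_inv_mul_self hAm (by rwa [add_sub_add_right_eq_sub])
  have h := hSchur.conjTranspose_mul_mul_same A⁻¹
  rw [hA.isHermitian.inv.eq] at h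
  convert h using 1
  rw [inv_sub_inv_add hA.isUnit hAm.isUnit]
  noncomm_ring

end Matrix

theorem stmt_19 {d : ℕ} (W m M : Matrix (Fin d) (Fin d) ℂ)
    (hW : W.PosDef) (hM : M.PosSemidef) (hm : m.PosSemidef)
    (hmW : (W - m).PosSemidef)
    (B : (Fin d → ℂ) → ℝ → Matrix (Fin d) (Fin d) ℂ → Matrix (Fin d) (Fin d) ℂ → ℝ)
    (hB : ∀ f F W' M', B f F W' M' = 4 * (F - (star f ⬝ᵥ (W' + M')⁻¹ *ᵥ f).re)) :
    ∀ (f : Fin d → ℂ) (F : ℝ),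
      2 * (star f ⬝ᵥ ((W + M)⁻¹ * m * (W + M)⁻¹) *ᵥ f).re ≤
        B f F W (M + m) - B f F W M := by
  intro f F
  have hmWM : (W + M - m).PosSemidef := by
    rw [add_sub_right_comm]
    exact hmW.add hM
  have h := ((hW.add_posSemidef hM).posSemidef_four_smul_inv_sub_inv_add_sub hm hmWM)
    |>.re_dotProduct_nonneg f
  simp only [Matrix.sub_mulVec, Matrix.smul_mulVec, dotProduct_sub, dotProduct_smul] at h
  simp only [nsmul_eq_mul, Nat.cast_ofNat, RCLike.re_to_complex, Complex.sub_re, Complex.mul_re,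
    Complex.re_ofNat, Complex.im_ofNat, zero_mul, sub_zero, sub_nonneg] at h
  rw [hB, hB, ← add_assoc]
  linarith
end
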